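/- arXiv:2003.13285 — 2 statements merged into one kernel-verified Lean document; each statement's English description precedes it below -/
import Mathlib

section
/- For H ∈ (0, 1/2), the function t ↦ C_H(t) = ½((t+1)^{2H} − 2 t^{2H} + (t−1)^{2H}) is monotonically increasing on [1, ∞). -/
/-!
On `(1, ∞)` the derivative of `fgnC H` is `H` times the second difference `(t + 1) ^ a - 2 t ^ a +
(t - 1) ^ a` of `s ↦ s ^ a`, `a = 2H - 1`. For `H ≤ 1/2` the exponent is nonpositive, so this power
is convex on `(0, ∞)` and the second difference is nonnegative; continuity of `fgnC H` for `H > 0`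
covers the endpoint `t = 1`.
-/

/-- The covariance function of fractional Gaussian noise with Hurst index `H`. -/
noncomputable def fgnC (H t : ℝ) : ℝ :=
  (|t + 1| ^ (2 * H) - 2 * |t| ^ (2 * H) + |t - 1| ^ (2 * H)) / 2

open Set Real

theorem convexOn_rpow_of_nonpos {p : ℝ} (hp : p ≤ 0) :
    ConvexOn ℝ (Ioi 0) fun x : ℝ => x ^ p := by
  refine MonotoneOn.convexOn_of_deriv (convex_Ioi 0)
    (continuousOn_id.rpow_const fun x hx => Or.inl (hx.ne')) ?_ ?_ <;> rw [interior_Ioi]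
  · exact fun x hx =>
      (hasDerivAt_rpow_const (Or.inl hx.ne')).differentiableAt.differentiableWithinAt
  intro x hx y _ hxy
  simp only [Real.deriv_rpow_const]
  exact mul_le_mul_of_nonpos_left (rpow_le_rpow_of_nonpos hx hxy (by linarith)) hp

theorem ConvexOn.two_mul_le_add {s : Set ℝ} {f : ℝ → ℝ} (hf : ConvexOn ℝ s f) {x h : ℝ}
    (hl : x - h ∈ s) (hr : x + h ∈ s) : 2 * f x ≤ f (x - h) + f (x + h) := by
  have hmid := hf.2 hl hr (by norm_num : (0 : ℝ) ≤ 1 / 2) (by norm_num : (0 : ℝ) ≤ 1 / 2)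
    (by norm_num)
  simp only [smul_eq_mul] at hmid
  rw [show 1 / 2 * (x - h) + 1 / 2 * (x + h) = x by ring] at hmid
  linarith

theorem continuous_fgnC {H : ℝ} (hH : 0 ≤ H) : Continuous (fgnC H) := by
  have h2H : 0 ≤ 2 * H := by linarith
  unfold fgnC
  fun_prop (disch := exact fun _ => Or.inr h2H)

theorem hasDerivAt_fgnC (H : ℝ) {t : ℝ} (ht : 1 < t) :
    HasDerivAt (fgnC H)
      (H * ((t + 1) ^ (2 * H - 1) - 2 * t ^ (2 * H - 1) + (t - 1) ^ (2 * H - 1))) t := by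
  have hpow : ∀ {c : ℝ}, 0 < t + c →
      HasDerivAt (fun s : ℝ => (s + c) ^ (2 * H)) (2 * H * (t + c) ^ (2 * H - 1)) t := fun hc =>
    by simpa using ((hasDerivAt_id t).add_const _).rpow_const (p := 2 * H) (Or.inl hc.ne')
  have hder := (((hpow (c := 1) (by linarith)).sub ((hpow (c := 0) (by linarith)).const_mul 2)).add
    (hpow (c := -1) (by linarith))).div_const 2
  simp only [add_zero, ← sub_eq_add_neg] at hder
  refine (hder.congr_of_eventuallyEq ?_).congr_deriv (by ring)
  filter_upwards [Ioi_mem_nhds ht] with s (hs : 1 < s)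
  simp only [fgnC, Pi.add_apply, Pi.sub_apply, abs_of_pos (by linarith : 0 < s + 1),
    abs_of_pos (by linarith : 0 < s), abs_of_pos (by linarith : 0 < s - 1)]

theorem fgnC_monotoneOn (H : ℝ) (hH : H ∈ Set.Ioo (0 : ℝ) (1 / 2)) :
    MonotoneOn (fgnC H) (Set.Ici (1 : ℝ)) := by
  obtain ⟨hH0, hH2⟩ := hH
  refine monotoneOn_of_hasDerivWithinAt_nonneg (convex_Ici 1) (continuous_fgnC hH0.le).continuousOn
    (fun t ht => (hasDerivAt_fgnC H (interior_Ici.subset ht)).hasDerivWithinAt) fun t ht => ?_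
  have ht : 1 < t := interior_Ici.subset ht
  have hconv := (convexOn_rpow_of_nonpos (by linarith : 2 * H - 1 ≤ 0)).two_mul_le_add
    (mem_Ioi.2 (by linarith : (0 : ℝ) < t - 1)) (mem_Ioi.2 (by linarith : (0 : ℝ) < t + 1))
  exact mul_nonneg hH0.le (by linarith)
end

section
/- For H ∈ (0, 1/2), the series ∑_{k≥1} |C_H(k)| converges, where C_H(k) = ½((k+1)^{2H} − 2 k^{2H} + (k−1)^{2H}). -/
theorem fgnC_abs_summable (H : ℝ) (hH : H ∈ Set.Ioo (0 : ℝ) (1 / 2)) :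
    Summable (fun k : ℕ => |fgnC H ((k : ℝ) + 1)|) := by
  obtain ⟨h0, h1⟩ := hH
  set p : ℝ := 2 * H with hp
  have hp0 : 0 < p := by positivity
  have hp1 : p < 1 := by rw [hp]; linarith
  -- concavity key inequality
  have key : ∀ x : ℝ, 0 ≤ x → x ^ p + (x + 2) ^ p ≤ 2 * (x + 1) ^ p := by
    intro x hx
    have cc := Real.concaveOn_rpow hp0.le hp1.le
    have h := cc.2 (Set.mem_Ici.mpr hx) (Set.mem_Ici.mpr (by linarith : (0:ℝ) ≤ x + 2))
      (by norm_num : (0:ℝ) ≤ (1/2 : ℝ)) (by norm_num : (0:ℝ) ≤ (1/2 : ℝ)) (by norm_num)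
    simp only [smul_eq_mul] at h
    have hxx : (1/2 : ℝ) * x + (1/2 : ℝ) * (x + 2) = x + 1 := by ring
    rw [hxx] at h
    linarith
  have g : ℕ → ℝ := fun n => ((n : ℝ) + 1) ^ p - (n : ℝ) ^ p
  have gnonneg : ∀ n : ℕ, 0 ≤ ((n : ℝ) + 1) ^ p - (n : ℝ) ^ p := fun n =>
    sub_nonneg.mpr (Real.rpow_le_rpow (Nat.cast_nonneg n) (by linarith) hp0.le)
  have habs : ∀ k : ℕ, |fgnC H ((k : ℝ) + 1)| =
      ((((k : ℝ) + 1) ^ p - (k : ℝ) ^ p) - (((k : ℝ) + 2) ^ p - ((k : ℝ) + 1) ^ p)) / 2 := by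
    intro k
    have hk : (0 : ℝ) ≤ (k : ℝ) := Nat.cast_nonneg k
    have h1 : |(k : ℝ) + 1 + 1| = (k : ℝ) + 2 := by rw [abs_of_nonneg]; ring; linarith
    have h2 : |(k : ℝ) + 1| = (k : ℝ) + 1 := abs_of_nonneg (by linarith)
    have h3 : |(k : ℝ) + 1 - 1| = (k : ℝ) := by rw [abs_of_nonneg] <;> [skip; linarith]; ring
    have hkey := key (k : ℝ) hk
    rw [fgnC, h1, h2, h3, abs_of_nonpos (by rw [← hp]; linarith [hkey])]
    rw [← hp]
    ring
  rw [funext habs]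
  apply summable_of_sum_range_le (c := ((0:ℝ) + 1) ^ p / 2)
  · intro k
    have hkey := key (k : ℝ) (Nat.cast_nonneg k)
    have := gnonneg k
    have := gnonneg (k + 1)
    push_cast at *
    linarith
  · intro n
    have hts : ∀ i : ℕ, ((((i : ℝ) + 1) ^ p - (i : ℝ) ^ p) - (((i : ℝ) + 2) ^ p - ((i : ℝ) + 1) ^ p)) / 2
        = (fun m : ℕ => (((m : ℝ) + 1) ^ p - (m : ℝ) ^ p) / 2) i
          - (fun m : ℕ => (((m : ℝ) + 1) ^ p - (m : ℝ) ^ p) / 2) (i + 1) := by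
      intro i; push_cast; ring
    rw [Finset.sum_congr rfl (fun i _ => hts i), Finset.sum_range_sub']
    have := gnonneg n
    push_cast
    rw [Real.zero_rpow hp0.ne']
    linarith
end
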